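/- arXiv:2504.11077 — 2 statements merged into one kernel-verified Lean document; each statement's English description precedes it below -/
import Mathlib

section
/- Let β > 0, α ≤ 0, and g be the Lorentzian metric g = e^{-2αxₙ}[cos(2βxₙ)(-dx₁²+dx₂²) - 2 sin(2βxₙ)dx₁dx₂] + Σᵢ₌₃^{n-1} e^{-2λᵢxₙ}dxᵢ² + dxₙ² on ℝ^n. For the curve c(t) = (1/β)(3 sin t, -sin 2t, 0,…,0, (π/2)(1-cos t)), one has β² g(c'(t), c'(t)) = exp((π|α|/β)(1-cos t))·f(t) + (π²/4) sin² t, where f(t) = cos(π cos t)(9 cos²t - 4 cos²2t) + 12 sin(π cos t) cos 2t cos t. -/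
open Real

/-- The closed curve `c(t) = (1/β)(3 sin t, -sin 2t, 0,…,0, (π/2)(1-cos t))`. -/
noncomputable def petrovCurve (n : ℕ) (β : ℝ) (t : ℝ) : Fin n → ℝ := fun i =>
  if (i : ℕ) = 0 then 3 * Real.sin t / β
  else if (i : ℕ) = 1 then -Real.sin (2 * t) / β
  else if (i : ℕ) = n - 1 then Real.pi / 2 * (1 - Real.cos t) / β
  else 0

/-- The quadratic form of the generalized Petrov metric
`g = e^{-2αxₙ}[cos(2βxₙ)(-dx₁²+dx₂²) - 2 sin(2βxₙ)dx₁dx₂]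
  + Σᵢ₌₃^{n-1} e^{-2λᵢxₙ} dxᵢ² + dxₙ²`
at the point `x`, evaluated on a tangent vector `v`. -/
noncomputable def petrovMetric (n : ℕ) (hn : 4 ≤ n) (α β : ℝ)
    (l : Fin n → ℝ) (x v : Fin n → ℝ) : ℝ :=
  let iN : Fin n := ⟨n - 1, by omega⟩
  let i0 : Fin n := ⟨0, by omega⟩
  let i1 : Fin n := ⟨1, by omega⟩
  Real.exp (-2 * α * x iN) *
      (Real.cos (2 * β * x iN) * (-(v i0) ^ 2 + (v i1) ^ 2) -
        2 * Real.sin (2 * β * x iN) * v i0 * v i1) +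
    (∑ i ∈ Finset.univ.filter (fun i : Fin n => 2 ≤ (i : ℕ) ∧ (i : ℕ) < n - 1),
      Real.exp (-2 * l i * x iN) * (v i) ^ 2) +
    (v iN) ^ 2

/-- The auxiliary function `f` controlling the causal character of the curve. -/
noncomputable def fPet (t : ℝ) : ℝ :=
  Real.cos (Real.pi * Real.cos t) *
      (9 * Real.cos t ^ 2 - 4 * Real.cos (2 * t) ^ 2) +
    12 * Real.sin (Real.pi * Real.cos t) * Real.cos (2 * t) * Real.cos t

/-! Only the coordinates `x₁, x₂, xₙ` of `c` move, so the transverse part of `g` drops out. Along `c`,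
`xₙ = π(1 - cos t)/(2β)`: the conformal factor `e^{-2αxₙ}` becomes `exp((π|α|/β)(1 - cos t))`, and the
rotation angle `2βxₙ = π - π cos t` turns `cos, sin` of it into `-cos(π cos t), sin(π cos t)`. The rest
is algebra. -/

lemma petrovMetric_eq_of_transverse_eq_zero (n : ℕ) (hn : 4 ≤ n) (α β : ℝ) (l x v : Fin n → ℝ)
    (hv : ∀ i : Fin n, 2 ≤ (i : ℕ) → (i : ℕ) < n - 1 → v i = 0) :
    petrovMetric n hn α β l x v =
      Real.exp (-2 * α * x ⟨n - 1, by omega⟩) *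
          (Real.cos (2 * β * x ⟨n - 1, by omega⟩) * (-(v ⟨0, by omega⟩) ^ 2 + (v ⟨1, by omega⟩) ^ 2) -
            2 * Real.sin (2 * β * x ⟨n - 1, by omega⟩) * v ⟨0, by omega⟩ * v ⟨1, by omega⟩) +
        (v ⟨n - 1, by omega⟩) ^ 2 := by
  have htransverse : ∑ i ∈ Finset.univ.filter (fun i : Fin n => 2 ≤ (i : ℕ) ∧ (i : ℕ) < n - 1),
      Real.exp (-2 * l i * x ⟨n - 1, by omega⟩) * (v i) ^ 2 = 0 :=
    Finset.sum_eq_zero fun i hi => by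
      obtain ⟨h2, hN⟩ := (Finset.mem_filter.mp hi).2
      simp [hv i h2 hN]
  rw [petrovMetric, htransverse, add_zero]

lemma hasDerivAt_petrovCurve (n : ℕ) (β t : ℝ) :
    HasDerivAt (petrovCurve n β)
      (fun i : Fin n => if (i : ℕ) = 0 then 3 * Real.cos t / β
        else if (i : ℕ) = 1 then -(2 * Real.cos (2 * t)) / β
        else if (i : ℕ) = n - 1 then Real.pi / 2 * Real.sin t / β
        else 0) t := by
  rw [hasDerivAt_pi]
  intro i
  unfold petrovCurve
  split_ifs
  · exact ((hasDerivAt_sin t).const_mul 3).div_const β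
  · have := (((hasDerivAt_sin (2 * t)).comp t ((hasDerivAt_id t).const_mul 2)).neg).div_const β
    exact this.congr_deriv (by simp only [mul_one]; ring)
  · have := (((hasDerivAt_const t (1:ℝ)).sub (hasDerivAt_cos t)).const_mul (π / 2)).div_const β
    exact this.congr_deriv (by ring)
  · exact hasDerivAt_const t 0

theorem metric_along_petrovCurve (n : ℕ) (hn : 4 ≤ n) (α β : ℝ)
    (hα : α ≤ 0) (hβ : 0 < β) (l : Fin n → ℝ) :
    ∀ t : ℝ,
      β ^ 2 *
          petrovMetric n hn α β l (petrovCurve n β t)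
            (deriv (petrovCurve n β) t) =
        Real.exp ((Real.pi * |α| / β) * (1 - Real.cos t)) * fPet t +
          (Real.pi ^ 2 / 4) * Real.sin t ^ 2 := by
  intro t
  have hN0 : n - 1 ≠ 0 := by omega
  have hN1 : n - 1 ≠ 1 := by omega
  rw [(hasDerivAt_petrovCurve n β t).deriv, petrovMetric_eq_of_transverse_eq_zero n hn α β l _ _
    fun i h2 hN => by simp [show (i : ℕ) ≠ 0 by omega, show (i : ℕ) ≠ 1 by omega, hN.ne]]
  simp only [petrovCurve, hN0, hN1, if_true, if_false, one_ne_zero]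
  have hphase : 2 * β * (π / 2 * (1 - cos t) / β) = π - π * cos t := by
    field_simp
  have hscale : -2 * α * (π / 2 * (1 - cos t) / β) = π * |α| / β * (1 - cos t) := by
    rw [abs_of_nonpos hα]
    field_simp
  rw [hphase, hscale, cos_pi_sub, sin_pi_sub, fPet]
  field_simp
  ring
end

section
/- Let g be an almost abelian Lie algebra with basis {X₁,…,Xₙ}, abelian ideal a = span{X₁,…,X_{n-1}}, and associated matrix A. Let λ₃ > ⋯ > λ_{n-1} be real numbers none of which is zero, α ≤ 0, β > 0, and A = [[α,-β],[β,α]] ⊕ Diag(λ₃,…,λ_{n-1}). Then g is indecomposable: there is no direct sum decomposition g = g₁ ⊕ g₂ into two nonzero ideals. Conversely, if some λᵢ = 0 then g is decomposable, with ℝXᵢ a direct complement commuting with the rest. -/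
/-!
If `A` is invertible and `x, y` commute, then the first component of `[x, y] = 0` says
`A (x₂ y₁ - y₂ x₁) = 0`, hence `y₂ • x = x₂ • y`. For commuting complementary subspaces
`S₁, S₂` this vector lies in `S₁ ⊓ S₂ = 0`, so a nonzero `x ∈ S₁` forces `y₂ = 0` on all of `S₂`
and symmetrically; then `S₁ ⊔ S₂` misses `X_n = (0, 1)`. The matrix `[[α, -β], [β, α]] ⊕ Diag(λ)`
is invertible as soon as `β ≠ 0` and all `λᵢ ≠ 0`.

If `λᵢ = 0`, both row and column `i` of `A` vanish, so `X_i` is central and the brackets take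
values in the hyperplane `{xᵢ = 0}`, which is then an ideal complementary to `ℝ X_i`.
-/

open Matrix

/-- The almost abelian bracket on `ℝ^{n-1} × ℝ` determined by a matrix `A`. -/
def aaBracket {m : ℕ} (A : Matrix (Fin m) (Fin m) ℝ)
    (x y : (Fin m → ℝ) × ℝ) : (Fin m → ℝ) × ℝ :=
  (x.2 • A.mulVec y.1 - y.2 • A.mulVec x.1, 0)

/-- The block-diagonal matrix `[[α, -β],[β, α]] ⊕ Diag(λ₃,…,λ_{n-1})`
(in Lean, the diagonal entries of index `≥ 2` are given by `l`). -/
def Amat (m : ℕ) (α β : ℝ) (l : Fin m → ℝ) : Matrix (Fin m) (Fin m) ℝ :=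
  fun i j =>
    if (i : ℕ) = 0 ∧ (j : ℕ) = 0 then α
    else if (i : ℕ) = 0 ∧ (j : ℕ) = 1 then -β
    else if (i : ℕ) = 1 ∧ (j : ℕ) = 0 then β
    else if (i : ℕ) = 1 ∧ (j : ℕ) = 1 then α
    else if i = j then l i
    else 0

/-- A submodule closed under the almost abelian bracket, i.e. a Lie subalgebra. -/
def IsBracketSubalg {m : ℕ} (A : Matrix (Fin m) (Fin m) ℝ)
    (S : Submodule ℝ ((Fin m → ℝ) × ℝ)) : Prop :=
  ∀ x ∈ S, ∀ y ∈ S, aaBracket A x y ∈ S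

section Bracket

variable {m : ℕ} (A : Matrix (Fin m) (Fin m) ℝ)

lemma aaBracket_skew (x y : (Fin m → ℝ) × ℝ) : aaBracket A y x = -aaBracket A x y := by
  ext <;> simp [aaBracket]

lemma smul_eq_smul_of_aaBracket_eq_zero (hA : Function.Injective A.mulVec)
    {x y : (Fin m → ℝ) × ℝ} (h : aaBracket A x y = 0) : y.2 • x = x.2 • y := by
  have hker : A *ᵥ (x.2 • y.1 - y.2 • x.1) = A *ᵥ 0 := by
    rw [mulVec_sub, mulVec_smul, mulVec_smul, mulVec_zero]
    exact congrArg Prod.fst h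
  have hfst : x.2 • y.1 = y.2 • x.1 := sub_eq_zero.mp (hA hker)
  exact Prod.ext hfst.symm (mul_comm _ _)

lemma le_ker_snd_of_aaBracket_eq_zero (hA : Function.Injective A.mulVec)
    {S₁ S₂ : Submodule ℝ ((Fin m → ℝ) × ℝ)} (h₁ : S₁ ≠ ⊥) (hdisj : Disjoint S₁ S₂)
    (hcomm : ∀ x ∈ S₁, ∀ y ∈ S₂, aaBracket A x y = 0) :
    S₂ ≤ LinearMap.ker (LinearMap.snd ℝ (Fin m → ℝ) ℝ) := by
  obtain ⟨x, hx, hx0⟩ := Submodule.exists_mem_ne_zero_of_ne_bot h₁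
  intro y hy
  have hmem : y.2 • x ∈ S₁ ⊓ S₂ :=
    ⟨S₁.smul_mem _ hx, smul_eq_smul_of_aaBracket_eq_zero A hA (hcomm x hx y hy) ▸ S₂.smul_mem _ hy⟩
  rw [hdisj.eq_bot, Submodule.mem_bot, smul_eq_zero] at hmem
  exact hmem.resolve_right hx0

theorem not_isCompl_of_aaBracket_eq_zero (hA : Function.Injective A.mulVec)
    {S₁ S₂ : Submodule ℝ ((Fin m → ℝ) × ℝ)} (h₁ : S₁ ≠ ⊥) (h₂ : S₂ ≠ ⊥)
    (hcomm : ∀ x ∈ S₁, ∀ y ∈ S₂, aaBracket A x y = 0) : ¬ IsCompl S₁ S₂ := by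
  intro hc
  have hS₂ := le_ker_snd_of_aaBracket_eq_zero A hA h₁ hc.disjoint hcomm
  have hS₁ := le_ker_snd_of_aaBracket_eq_zero A hA h₂ hc.disjoint.symm fun y hy x hx => by
    rw [aaBracket_skew, hcomm x hx y hy, neg_zero]
  have hX : ((0 : Fin m → ℝ), (1 : ℝ)) ∈ LinearMap.ker (LinearMap.snd ℝ (Fin m → ℝ) ℝ) :=
    sup_le hS₁ hS₂ (hc.sup_eq_top ▸ Submodule.mem_top)
  simp at hX

end Bracket

section Splitting

variable {m : ℕ} (A : Matrix (Fin m) (Fin m) ℝ) (i : Fin m)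

def coordKer : Submodule ℝ ((Fin m → ℝ) × ℝ) :=
  LinearMap.ker ((LinearMap.proj i).comp (LinearMap.fst ℝ (Fin m → ℝ) ℝ))

lemma mem_coordKer {x : (Fin m → ℝ) × ℝ} : x ∈ coordKer i ↔ x.1 i = 0 := Iff.rfl

lemma coordKer_ne_bot : coordKer i ≠ ⊥ := by
  rw [Submodule.ne_bot_iff]
  exact ⟨(0, 1), (mem_coordKer i).mpr rfl, by simp⟩

lemma span_single_ne_bot : Submodule.span ℝ {((Pi.single i 1 : Fin m → ℝ), (0 : ℝ))} ≠ ⊥ := by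
  simp

lemma isCompl_coordKer_span_single :
    IsCompl (coordKer i) (Submodule.span ℝ {((Pi.single i 1 : Fin m → ℝ), (0 : ℝ))}) := by
  refine Submodule.isCompl_span_singleton_of_isCoatom_of_notMem
    (LinearMap.isCoatom_ker_of_surjective fun c => ⟨(Pi.single i c, 0), by simp⟩) ?_
  simp [mem_coordKer]

lemma aaBracket_mem_coordKer (hrow : ∀ v, (A *ᵥ v) i = 0) (x y : (Fin m → ℝ) × ℝ) :
    aaBracket A x y ∈ coordKer i := by
  simp [mem_coordKer, aaBracket, hrow]

lemma isBracketSubalg_span_single :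
    IsBracketSubalg A (Submodule.span ℝ {((Pi.single i 1 : Fin m → ℝ), (0 : ℝ))}) := by
  intro x hx y hy
  obtain ⟨c, rfl⟩ := Submodule.mem_span_singleton.mp hx
  obtain ⟨d, rfl⟩ := Submodule.mem_span_singleton.mp hy
  rw [show aaBracket A _ _ = 0 by simp [aaBracket]]
  exact Submodule.zero_mem _

lemma aaBracket_span_single_eq_zero (hcol : A *ᵥ Pi.single i 1 = 0) (x : (Fin m → ℝ) × ℝ)
    {y : (Fin m → ℝ) × ℝ} (hy : y ∈ Submodule.span ℝ {((Pi.single i 1 : Fin m → ℝ), (0 : ℝ))}) :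
    aaBracket A x y = 0 := by
  obtain ⟨c, rfl⟩ := Submodule.mem_span_singleton.mp hy
  simp [aaBracket, mulVec_smul, hcol]

end Splitting

section Amat

variable {m : ℕ} (α β : ℝ) (l : Fin m → ℝ)

lemma Amat_apply_of_two_le_left {i : Fin m} (hi : 2 ≤ (i : ℕ)) (j : Fin m) :
    Amat m α β l i j = if i = j then l i else 0 := by
  simp [Amat, show (i : ℕ) ≠ 0 by omega, show (i : ℕ) ≠ 1 by omega]

lemma Amat_apply_of_two_le_right (i : Fin m) {j : Fin m} (hj : 2 ≤ (j : ℕ)) :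
    Amat m α β l i j = if i = j then l j else 0 := by
  simp only [Amat, show (j : ℕ) ≠ 0 by omega, show (j : ℕ) ≠ 1 by omega, and_false, if_false]
  split_ifs with h <;> simp [h]

lemma Amat_mulVec_apply_of_two_le (v : Fin m → ℝ) {i : Fin m} (hi : 2 ≤ (i : ℕ)) :
    (Amat m α β l *ᵥ v) i = l i * v i := by
  simp [mulVec, dotProduct, Amat_apply_of_two_le_left α β l hi, ite_mul]

lemma Amat_mulVec_single_of_two_le {j : Fin m} (hj : 2 ≤ (j : ℕ)) :
    Amat m α β l *ᵥ Pi.single j 1 = Pi.single j (l j) := by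
  ext i
  rw [mulVec_single_one, col_apply, Amat_apply_of_two_le_right α β l i hj, Pi.single_apply]

lemma Amat_mulVec_apply_zero (hm : 2 ≤ m) (v : Fin m → ℝ) :
    (Amat m α β l *ᵥ v) ⟨0, by omega⟩ = α * v ⟨0, by omega⟩ - β * v ⟨1, by omega⟩ := by
  rw [mulVec, dotProduct, Fintype.sum_eq_add ⟨0, by omega⟩ ⟨1, by omega⟩ (by simp [Fin.ext_iff])]
  · simp only [Amat, and_self, ↓reduceIte, one_ne_zero, and_false, neg_mul]
    ring
  · rintro j ⟨h0, h1⟩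
    have hj : 2 ≤ (j : ℕ) := by simp only [ne_eq, Fin.ext_iff] at h0 h1; omega
    rw [Amat_apply_of_two_le_right α β l _ hj, if_neg (Ne.symm h0), zero_mul]

lemma Amat_mulVec_apply_one (hm : 2 ≤ m) (v : Fin m → ℝ) :
    (Amat m α β l *ᵥ v) ⟨1, by omega⟩ = β * v ⟨0, by omega⟩ + α * v ⟨1, by omega⟩ := by
  rw [mulVec, dotProduct, Fintype.sum_eq_add ⟨0, by omega⟩ ⟨1, by omega⟩ (by simp [Fin.ext_iff])]
  · simp [Amat]
  · rintro j ⟨h0, h1⟩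
    have hj : 2 ≤ (j : ℕ) := by simp only [ne_eq, Fin.ext_iff] at h0 h1; omega
    rw [Amat_apply_of_two_le_right α β l _ hj, if_neg (Ne.symm h1), zero_mul]

lemma Amat_mulVec_injective (hm : 2 ≤ m) (hβ : β ≠ 0)
    (hl : ∀ i : Fin m, 2 ≤ (i : ℕ) → l i ≠ 0) :
    Function.Injective (Amat m α β l).mulVec := by
  refine (injective_iff_map_eq_zero (Amat m α β l).mulVecLin).mpr fun v hv => ?_
  change Amat m α β l *ᵥ v = 0 at hv
  have h0 := Amat_mulVec_apply_zero α β l hm v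
  have h1 := Amat_mulVec_apply_one α β l hm v
  rw [hv, Pi.zero_apply] at h0 h1
  have hdet : α ^ 2 + β ^ 2 ≠ 0 := by positivity
  have hv0 : v ⟨0, by omega⟩ = 0 :=
    (mul_eq_zero.mp (by linear_combination -α * h0 - β * h1)).resolve_left hdet
  have hv1 : v ⟨1, by omega⟩ = 0 :=
    (mul_eq_zero.mp (by linear_combination β * h0 - α * h1)).resolve_left hdet
  ext i
  by_cases hi : 2 ≤ (i : ℕ)
  · have := Amat_mulVec_apply_of_two_le α β l v hi
    rw [hv, Pi.zero_apply, eq_comm] at this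
    exact (mul_eq_zero.mp this).resolve_left (hl i hi)
  · obtain h | h : i = ⟨0, by omega⟩ ∨ i = ⟨1, by omega⟩ := by
      simp only [Fin.ext_iff]; omega
    · rw [h, hv0, Pi.zero_apply]
    · rw [h, hv1, Pi.zero_apply]

end Amat

theorem generalized_petrov_decomposability (m : ℕ) (hm : 3 ≤ m)
    (α β : ℝ) (l : Fin m → ℝ) :
    -- indecomposability when all λᵢ are nonzero (with α ≤ 0, β > 0 and λ₃ > ⋯ > λ_{n-1})
    ((α ≤ 0) → (0 < β) → (∀ i : Fin m, 2 ≤ (i : ℕ) → l i ≠ 0) →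
      (∀ i j : Fin m, 2 ≤ (i : ℕ) → (i : ℕ) < (j : ℕ) → l j < l i) →
      ¬ ∃ S₁ S₂ : Submodule ℝ ((Fin m → ℝ) × ℝ),
          S₁ ≠ ⊥ ∧ S₂ ≠ ⊥ ∧
          IsBracketSubalg (Amat m α β l) S₁ ∧ IsBracketSubalg (Amat m α β l) S₂ ∧
          S₁ ⊓ S₂ = ⊥ ∧ S₁ ⊔ S₂ = ⊤ ∧
          (∀ x ∈ S₁, ∀ y ∈ S₂, aaBracket (Amat m α β l) x y = 0)) ∧
    -- decomposability with complement ℝ·Xᵢ when some λᵢ = 0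
    (∀ i : Fin m, 2 ≤ (i : ℕ) → l i = 0 →
      ∃ S₁ : Submodule ℝ ((Fin m → ℝ) × ℝ),
        S₁ ≠ ⊥ ∧
        Submodule.span ℝ {((Pi.single i 1 : Fin m → ℝ), (0 : ℝ))} ≠ ⊥ ∧
        IsBracketSubalg (Amat m α β l) S₁ ∧
        IsBracketSubalg (Amat m α β l)
          (Submodule.span ℝ {((Pi.single i 1 : Fin m → ℝ), (0 : ℝ))}) ∧
        S₁ ⊓ Submodule.span ℝ {((Pi.single i 1 : Fin m → ℝ), (0 : ℝ))} = ⊥ ∧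
        S₁ ⊔ Submodule.span ℝ {((Pi.single i 1 : Fin m → ℝ), (0 : ℝ))} = ⊤ ∧
        (∀ x ∈ S₁, ∀ y ∈ Submodule.span ℝ {((Pi.single i 1 : Fin m → ℝ), (0 : ℝ))},
          aaBracket (Amat m α β l) x y = 0)) := by
  refine ⟨fun _ hβ hl _ ⟨S₁, S₂, h₁, h₂, _, _, hinf, hsup, hcomm⟩ => ?_, fun i hi hli => ?_⟩
  · exact not_isCompl_of_aaBracket_eq_zero _ (Amat_mulVec_injective α β l (by omega) hβ.ne' hl)
      h₁ h₂ hcomm ⟨disjoint_iff.mpr hinf, codisjoint_iff.mpr hsup⟩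
  · have hrow (v : Fin m → ℝ) : (Amat m α β l *ᵥ v) i = 0 := by
      rw [Amat_mulVec_apply_of_two_le α β l v hi, hli, zero_mul]
    have hcol : Amat m α β l *ᵥ Pi.single i 1 = 0 := by
      rw [Amat_mulVec_single_of_two_le α β l hi, hli, Pi.single_zero]
    have hc := isCompl_coordKer_span_single i
    exact ⟨coordKer i, coordKer_ne_bot i, span_single_ne_bot i,
      fun x _ y _ => aaBracket_mem_coordKer _ i hrow x y, isBracketSubalg_span_single _ i,
      hc.inf_eq_bot, hc.sup_eq_top, fun x _ _ hy => aaBracket_span_single_eq_zero _ i hcol x hy⟩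
end
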